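/- arXiv:2304.02143 — 4 statements merged into one kernel-verified Lean document; each statement's English description precedes it below -/
import Mathlib

section
/- Let κ be an infinite cardinal, let F be a nonprincipal ultrafilter on κ, and let {D_α : α < κ} be a partition of κ. For each α < κ let F_α be an ultrafilter on κ extending the filter [FR(κ), {D_α}] generated by FR(κ) together with D_α, and let G be an ultrafilter on κ extending the filter generated by FR(κ) together with all the sets ⋃_{α∈B} D_α for B ∈ F. If G belongs to the topological closure of {F_α : α < κ} in βκ, then Σ({F_α : α < κ}, F) = G. -/
noncomputable section

open Cardinal Set

namespace RFNote

variable {K : Type}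

/-- A `κ`-indexed family of ultrafilters on `κ` is *`κ`-discrete* iff there is a partition
`{A a : a ∈ κ}` of `κ` with `A a ∈ X a` for every `a`. -/
def KDiscrete (X : K → Ultrafilter K) : Prop :=
  ∃ A : K → Set K, (Pairwise fun a b => Disjoint (A a) (A b)) ∧
    (⋃ a, A a) = Set.univ ∧ ∀ a, A a ∈ X a

/-- `Σ(X, F) = {A ⊆ κ : {a : A ∈ X a} ∈ F}`, the sum of the family `X` along `F`. -/
def SigmaU (X : K → Ultrafilter K) (F : Ultrafilter K) : Ultrafilter K := F.bind X

/-- The Rudin–Frolík (pre)order: `F ≤_RF G` iff `G = Σ(X, F)` for some `κ`-discrete `X`. -/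
def RFle (F G : Ultrafilter K) : Prop :=
  ∃ X : K → Ultrafilter K, KDiscrete X ∧ G = SigmaU X F

/-- `F =_RF G` iff `F ≤_RF G` and `G ≤_RF F`. -/
def RFeq (F G : Ultrafilter K) : Prop := RFle F G ∧ RFle G F

/-- `F <_RF G` iff `F ≤_RF G` and not `F =_RF G`. -/
def RFlt (F G : Ultrafilter K) : Prop := RFle F G ∧ ¬ RFeq F G

/-- An ultrafilter is nonprincipal iff it is not of the form `pure a`. -/
def NonPrincipal (F : Ultrafilter K) : Prop := ∀ a : K, F ≠ pure a

/-- **Lemma 1.** Let `κ` be infinite, `F` a nonprincipal ultrafilter on `κ`, and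
`{D a : a ∈ κ}` a partition of `κ`.  If each `X a` is an ultrafilter extending the filter
generated by `FR(κ)` together with `D a`, and `G` is an ultrafilter extending the filter
generated by `FR(κ)` together with all sets `⋃ a ∈ B, D a` for `B ∈ F`, and `G` lies in the
closure of `{X a : a ∈ κ}` in `βκ`, then `Σ({X a : a ∈ κ}, F) = G`. -/
theorem omega_of_partition_sum
    (hinf : ℵ₀ ≤ Cardinal.mk K)
    (F : Ultrafilter K) (hF : NonPrincipal F)
    (D : K → Set K)
    (hDdisj : Pairwise fun a b => Disjoint (D a) (D b))
    (hDcov : (⋃ a, D a) = Set.univ)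
    (X : K → Ultrafilter K)
    -- each `X a` extends `FR(κ)` …
    (hXfr : ∀ a : K, ∀ A : Set K, Cardinal.mk ↥(Aᶜ) < Cardinal.mk K → A ∈ X a)
    -- … together with `D a`
    (hXD : ∀ a : K, D a ∈ X a)
    (G : Ultrafilter K)
    -- `G` extends `FR(κ)` …
    (hGfr : ∀ A : Set K, Cardinal.mk ↥(Aᶜ) < Cardinal.mk K → A ∈ G)
    -- … together with the sets `⋃ a ∈ B, D a` for `B ∈ F`
    (hGD : ∀ B : Set K, B ∈ F → (⋃ a ∈ B, D a) ∈ G)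
    (hcl : G ∈ closure (Set.range X)) :
    SigmaU X F = G := by
  -- It suffices to show every member of `G` belongs to `Σ(X, F)`.
  have key : ∀ A : Set K, A ∈ G → A ∈ SigmaU X F := by
    intro A hA
    -- membership in the bind
    show {a | A ∈ X a} ∈ F
    by_contra hC
    have hCc : {a | A ∈ X a}ᶜ ∈ F := (Ultrafilter.compl_mem_iff_notMem).2 hC
    set C : Set K := {a | A ∈ X a}ᶜ with hCdef
    -- the union of the blocks over C is in G
    have hU : (⋃ a ∈ C, D a) ∈ G := hGD C hCc
    have hAU : A ∩ ⋃ a ∈ C, D a ∈ G := G.toFilter.inter_sets hA hU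
    -- the basic open set around G meets the range of X
    have hopen : IsOpen {u : Ultrafilter K | A ∩ (⋃ a ∈ C, D a) ∈ u} :=
      ultrafilter_isOpen_basic _
    obtain ⟨u, hu, a, rfl⟩ :
        ∃ u ∈ {u : Ultrafilter K | A ∩ (⋃ a ∈ C, D a) ∈ u}, ∃ a, X a = u := by
      have := (mem_closure_iff.1 hcl) _ hopen hAU
      obtain ⟨u, hu1, hu2⟩ := this
      exact ⟨u, hu1, hu2⟩
    -- so `A ∈ X a` and `⋃ a ∈ C, D a ∈ X a`
    have hAa : A ∈ X a := (X a).toFilter.mem_of_superset hu inter_subset_left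
    have hUa : (⋃ b ∈ C, D b) ∈ X a := (X a).toFilter.mem_of_superset hu inter_subset_right
    -- `a ∈ C`, since otherwise `D a` is disjoint from the union
    have haC : a ∈ C := by
      by_contra haC
      have hdisj : Disjoint (D a) (⋃ b ∈ C, D b) := by
        refine Set.disjoint_iUnion₂_right.2 fun b hb => hDdisj ?_
        rintro rfl; exact haC hb
      have : D a ∩ (⋃ b ∈ C, D b) ∈ X a := (X a).toFilter.inter_sets (hXD a) hUa
      rw [Set.disjoint_iff_inter_eq_empty.1 hdisj] at this
      exact (X a).toFilter.empty_notMem this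
    exact haC hAa
  -- conclude equality of ultrafilters
  have hle : (SigmaU X F : Filter K) ≤ (G : Filter K) := fun s hs => key s hs
  exact (Ultrafilter.coe_le_coe).1 hle
end RFNote
end
end

section
/- Let κ be a regular infinite cardinal and φ̂ a κ-shrinking function. Let {E_t : t ∈ [κ]^{<ω}} be a family of pairwise disjoint subsets of κ and {A_η : η < κ⁺} subsets of κ such that |⋂_{η∈p} A_η ∖ ⋃_{t ⊇ φ̂(p)} E_t| < κ for every p ∈ [κ⁺]^{<ω}. Let {D_s : s ∈ [κ]^{<ω}} be a partition of κ and let ⟨V_s : s ∈ [κ]^{<ω}⟩ be subsets of κ with D_s ⊆ V_s for all s and V_t ⊆ V_s whenever t ⊆ s. Define W_η = A_η ∩ ⋃{E_t ∖ V_s : t, s ∈ [κ]^{<ω}, t ⊆ s} for η < κ⁺. Then for every nonempty p ∈ [κ⁺]^{<ω}, |⋂_{η∈p} W_η ∩ D_{φ̂(p)}| < κ. -/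
noncomputable section

open Cardinal Set

namespace RFNote

variable {K L : Type}

/-- `φ : [κ⁺]^{<ω} → [κ]^{<ω}` is `κ`-shrinking iff it is monotone and sends `∅` to `∅`.
Here `L` is a set of cardinality `κ⁺`. -/
def Shrinking (φ : Finset L → Finset K) : Prop :=
  (∀ p q : Finset L, p ⊆ q → φ p ⊆ φ q) ∧ φ (∅ : Finset L) = (∅ : Finset K)

/-- A partition of `κ` indexed by the finite subsets of `κ`. -/
def IsPartitionFin (D : Finset K → Set K) : Prop :=
  (Pairwise fun s t => Disjoint (D s) (D t)) ∧ (⋃ t, D t) = Set.univ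

/-- The key computation in the proof of property (P): with `E`, `A`, `D`, `V` as stated and
`W η = A η ∩ ⋃ {E t ∖ V s : t ⊆ s}`, one has `|⋂_{η ∈ p} W η ∩ D (φ p)| < κ` for every
nonempty finite `p`. -/
theorem small_inter_W_D
    (hreg : (Cardinal.mk K).IsRegular)
    (hL : Cardinal.mk L = Order.succ (Cardinal.mk K))
    (φ : Finset L → Finset K) (hφ : Shrinking φ)
    (E : Finset K → Set K)
    (hEdisj : Pairwise fun s t => Disjoint (E s) (E t))
    (A : L → Set K)
    (hA : ∀ p : Finset L,
      Cardinal.mk ↥((⋂ η ∈ p, A η) \ ⋃ t ∈ {t : Finset K | φ p ⊆ t}, E t)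
        < Cardinal.mk K)
    (D : Finset K → Set K) (hD : IsPartitionFin D)
    (V : Finset K → Set K)
    (hDV : ∀ s : Finset K, D s ⊆ V s)
    (hVmono : ∀ t s : Finset K, t ⊆ s → V t ⊆ V s)
    (W : L → Set K)
    (hW : ∀ η : L, W η = A η ∩ ⋃ t : Finset K, ⋃ s : Finset K, ⋃ _ : t ⊆ s, (E t \ V s)) :
    ∀ p : Finset L, p ≠ ∅ →
      Cardinal.mk ↥((⋂ η ∈ p, W η) ∩ D (φ p)) < Cardinal.mk K := by
  intro p hp
  obtain ⟨η₀, hη₀⟩ := Finset.nonempty_iff_ne_empty.2 hp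
  refine lt_of_le_of_lt (Cardinal.mk_le_mk_of_subset ?_) (hA p)
  intro x hx
  obtain ⟨hxW, hxD⟩ := hx
  have hxA : x ∈ ⋂ η ∈ p, A η := by
    simp only [mem_iInter] at hxW ⊢
    intro η hη
    have := hxW η hη
    rw [hW η] at this
    exact this.1
  refine ⟨hxA, ?_⟩
  intro hxE
  simp only [mem_iUnion, mem_setOf_eq] at hxE
  obtain ⟨t, ht, hxt⟩ := hxE
  have hx0 := (mem_iInter₂.1 hxW) η₀ hη₀
  rw [hW η₀] at hx0
  obtain ⟨-, hx2⟩ := hx0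
  simp only [mem_iUnion] at hx2
  obtain ⟨t', s', hts, hxE', hxV⟩ := hx2
  have htt : t = t' := by
    by_contra h
    exact (hEdisj h).le_bot ⟨hxt, hxE'⟩
  apply hxV
  exact hVmono _ _ (subset_trans ht (htt ▸ hts)) (hDV _ hxD)

end RFNote
end
end

section
/- Let κ be a regular infinite cardinal, φ̂ a κ-shrinking function, F a filter on κ, I an index set, and let {E^i_t : t ∈ [κ]^{<ω}, i ∈ I} ∪ {A^i_η : η < κ⁺, i ∈ I} be an independent matrix of |I| step families over κ with respect to F, φ̂. Then for every Z ⊆ κ there exist a finite set I₀ ⊆ I and a filter F' ⊇ F on κ such that either Z ∈ F' or κ∖Z ∈ F', and the submatrix {E^i_t : t ∈ [κ]^{<ω}, i ∈ I∖I₀} ∪ {A^i_η : η < κ⁺, i ∈ I∖I₀} is an independent matrix of |I∖I₀| step families with respect to F', φ̂. -/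
noncomputable section

open Cardinal Set

namespace RFNote

variable {K L : Type}

/-- A *step family* over `κ` with respect to `φ`: disjoint `E`'s, small intersections with
unions of `E t` for `t ⊉ φ p`, and large intersections with each `E t` for `t ⊇ φ p`. -/
def StepFamily (φ : Finset L → Finset K) (E : Finset K → Set K) (A : L → Set K) : Prop :=
  (Pairwise fun s t => Disjoint (E s) (E t)) ∧
  (∀ p : Finset L,
    Cardinal.mk ↥((⋂ η ∈ p, A η) ∩ ⋃ t ∈ {t : Finset K | ¬ φ p ⊆ t}, E t)
      < Cardinal.mk K) ∧
  (∀ p : Finset L, ∀ t : Finset K, φ p ⊆ t →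
    Cardinal.mk ↥((⋂ η ∈ p, A η) ∩ E t) = Cardinal.mk K)

/-- An *independent matrix of `|I|` step families* over `κ` with respect to `F, φ`. -/
def IndepMatrix {I : Type} (F : Filter K) (φ : Finset L → Finset K)
    (E : I → Finset K → Set K) (A : I → L → Set K) : Prop :=
  (∀ i : I, StepFamily φ (E i) (A i)) ∧
  (∀ n : ℕ, ∀ i : Fin n → I, Function.Injective i →
    ∀ p : Fin n → Finset L, ∀ t : Fin n → Finset K, (∀ k : Fin n, φ (p k) ⊆ t k) →
      (⋂ k : Fin n, ((⋂ η ∈ p k, A (i k) η) ∩ E (i k) (t k)))ᶜ ∉ F)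

lemma iInter_fin_add {α : Type*} {n m : ℕ} (f : Fin (n + m) → Set α) :
    (⋂ k, f k) =
      (⋂ a : Fin n, f (Fin.castAdd m a)) ∩ (⋂ b : Fin m, f (Fin.natAdd n b)) := by
  ext x
  simp only [Set.mem_iInter, Set.mem_inter_iff]
  constructor
  · exact fun h => ⟨fun a => h _, fun b => h _⟩
  · rintro ⟨h1, h2⟩ k
    exact Fin.addCases (motive := fun k => x ∈ f k) h1 h2 k

lemma fin_add_rep {n m : ℕ} (a : Fin (n + m)) :
    (∃ a', a = Fin.castAdd m a') ∨ (∃ a', a = Fin.natAdd n a') :=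
  Fin.addCases (motive := fun a => (∃ a', a = Fin.castAdd m a') ∨ ∃ a', a = Fin.natAdd n a')
    (fun a' => Or.inl ⟨a', rfl⟩) (fun a' => Or.inr ⟨a', rfl⟩) a

/-- Deciding one set `Z` at the cost of finitely many step families: given an independent
matrix with respect to a filter `F`, for every `Z ⊆ κ` there are a finite `I₀ ⊆ I` and a
(proper) filter `F' ⊇ F` deciding `Z` such that the remaining matrix is independent with
respect to `F'`. -/
theorem decide_set_of_indepMatrix {I : Type}
    (hreg : (Cardinal.mk K).IsRegular)
    (hL : Cardinal.mk L = Order.succ (Cardinal.mk K))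
    (φ : Finset L → Finset K) (hφ : Shrinking φ)
    (F : Filter K)
    (E : I → Finset K → Set K) (A : I → L → Set K)
    (hmat : IndepMatrix F φ E A) :
    ∀ Z : Set K, ∃ (I₀ : Finset I) (F' : Filter K), F'.NeBot ∧
      (∀ s : Set K, s ∈ F → s ∈ F') ∧
      (Z ∈ F' ∨ Zᶜ ∈ F') ∧
      IndepMatrix F' φ (fun i : {i : I // i ∉ I₀} => E i.1) (fun i => A i.1) := by
  classical
  intro Z
  by_cases hcase : ∀ (n : ℕ) (i : Fin n → I), Function.Injective i →
      ∀ (p : Fin n → Finset L) (t : Fin n → Finset K), (∀ k, φ (p k) ⊆ t k) →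
      ∀ B ∈ F, (B ∩ Z ∩ ⋂ k, ((⋂ η ∈ p k, A (i k) η) ∩ E (i k) (t k))).Nonempty
  · refine ⟨∅, F ⊓ Filter.principal Z, ?_, fun s hs => Filter.mem_inf_of_left hs,
      Or.inl (Filter.mem_inf_of_right (Filter.mem_principal_self Z)), fun i => hmat.1 i.1, ?_⟩
    · rw [Filter.inf_principal_neBot_iff]
      intro U hU
      have h0 := hcase 0 (fun k => k.elim0) (fun a => a.elim0) (fun k => k.elim0)
        (fun k => k.elim0) (fun k => k.elim0) U hU
      simpa using h0
    · intro m j hj q s hqs hmem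
      rw [Filter.mem_inf_principal] at hmem
      have hj' : Function.Injective (fun k => (j k).1) := by
        intro a b hab
        exact hj (Subtype.ext hab)
      obtain ⟨x, hx⟩ := hcase m (fun k => (j k).1) hj' q s hqs _ hmem
      exact (hx.1.1 hx.1.2) hx.2
  · push_neg at hcase
    obtain ⟨n, i, hi, p, t, hpt, B, hB, hne⟩ := hcase
    set M₀ : Set K := ⋂ k, ((⋂ η ∈ p k, A (i k) η) ∩ E (i k) (t k)) with hM₀
    set I₀ : Finset I := Finset.image i Finset.univ with hI₀
    have key : ∀ B' ∈ F, ∀ (m : ℕ) (j : Fin m → {x : I // x ∉ I₀}), Function.Injective j →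
        ∀ (q : Fin m → Finset L) (s : Fin m → Finset K), (∀ k, φ (q k) ⊆ s k) →
        (B' ∩ Zᶜ ∩ ⋂ k, ((⋂ η ∈ q k, A (j k).1 η) ∩ E (j k).1 (s k))).Nonempty := by
      intro B' hB' m j hj q s hqs
      set ii : Fin (n + m) → I := Fin.addCases i (fun b => (j b).1) with hii_def
      set pp : Fin (n + m) → Finset L := Fin.addCases p q with hpp_def
      set tt : Fin (n + m) → Finset K := Fin.addCases t s with htt_def
      have hmemI₀ : ∀ a : Fin n, i a ∈ I₀ := fun a =>
        Finset.mem_image_of_mem i (Finset.mem_univ a)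
      have hii : Function.Injective ii := by
        intro a b hab
        rcases fin_add_rep a with ⟨a', rfl⟩ | ⟨a', rfl⟩ <;>
          rcases fin_add_rep b with ⟨b', rfl⟩ | ⟨b', rfl⟩
        · simp only [hii_def, Fin.addCases_left] at hab
          exact congrArg _ (hi hab)
        · exfalso
          simp only [hii_def, Fin.addCases_left, Fin.addCases_right] at hab
          exact (j b').2 (hab ▸ hmemI₀ a')
        · exfalso
          simp only [hii_def, Fin.addCases_left, Fin.addCases_right] at hab
          exact (j a').2 (hab.symm ▸ hmemI₀ b')
        · simp only [hii_def, Fin.addCases_right] at hab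
          exact congrArg _ (hj (Subtype.ext hab))
      have hsub : ∀ k, φ (pp k) ⊆ tt k := by
        intro k
        rcases fin_add_rep k with ⟨a, rfl⟩ | ⟨a, rfl⟩
        · simpa only [hpp_def, htt_def, Fin.addCases_left] using hpt a
        · simpa only [hpp_def, htt_def, Fin.addCases_right] using hqs a
      have hnot := hmat.2 (n + m) ii hii pp tt hsub
      have hsplit : (⋂ k : Fin (n + m), ((⋂ η ∈ pp k, A (ii k) η) ∩ E (ii k) (tt k))) =
          M₀ ∩ ⋂ k, ((⋂ η ∈ q k, A (j k).1 η) ∩ E (j k).1 (s k)) := by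
        rw [iInter_fin_add (fun k => ((⋂ η ∈ pp k, A (ii k) η) ∩ E (ii k) (tt k)))]
        simp only [hii_def, hpp_def, htt_def, Fin.addCases_left, Fin.addCases_right, hM₀]
      rw [hsplit] at hnot
      set M : Set K := ⋂ k, ((⋂ η ∈ q k, A (j k).1 η) ∩ E (j k).1 (s k)) with hM
      have hBB : B' ∩ B ∈ F := Filter.inter_mem hB' hB
      have hnon : ((B' ∩ B) ∩ (M₀ ∩ M)).Nonempty := by
        by_contra hemp
        rw [Set.not_nonempty_iff_eq_empty] at hemp
        exact hnot (Filter.mem_of_superset hBB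
          (Set.disjoint_iff_inter_eq_empty.mpr hemp).subset_compl_right)
      obtain ⟨x, hx⟩ := hnon
      refine ⟨x, ⟨hx.1.1, ?_⟩, hx.2.2⟩
      intro hxZ
      have : x ∈ B ∩ Z ∩ M₀ := ⟨⟨hx.1.2, hxZ⟩, hx.2.1⟩
      rw [hne] at this
      exact this
    refine ⟨I₀, F ⊓ Filter.principal Zᶜ, ?_, fun s hs => Filter.mem_inf_of_left hs,
      Or.inr (Filter.mem_inf_of_right (Filter.mem_principal_self Zᶜ)), fun i => hmat.1 i.1, ?_⟩
    · rw [Filter.inf_principal_neBot_iff]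
      intro U hU
      have h0 := key U hU 0 (fun k => k.elim0) (fun a => a.elim0) (fun k => k.elim0)
        (fun k => k.elim0) (fun k => k.elim0)
      simpa using h0
    · intro m j hj q s hqs hmem
      rw [Filter.mem_inf_principal] at hmem
      obtain ⟨x, hx⟩ := key _ hmem m j hj q s hqs
      exact (hx.1.1 hx.1.2) hx.2

end RFNote
end
end

section
/- Let κ be an infinite cardinal and let X = {F_α : α < κ} be a κ-discrete set of pairwise distinct ultrafilters on κ. If G is an ultrafilter on κ belonging to the topological closure of X in βκ, then there exists a unique ultrafilter H on κ such that Σ(X, H) = G. -/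
noncomputable section

open Cardinal Set

namespace RFNote

variable {K : Type}

theorem mem_bind_iff {H : Ultrafilter K} {X : K → Ultrafilter K} {S : Set K} :
    S ∈ H.bind X ↔ {a | S ∈ X a} ∈ H := Iff.rfl

/-- If `X` is a `κ`-discrete family of pairwise distinct ultrafilters on `κ` and the
ultrafilter `G` lies in the topological closure of `{X a : a ∈ κ}` in `βκ`, then there is a
unique ultrafilter `H` with `Σ(X, H) = G`. -/
theorem existsUnique_omega
    (hinf : ℵ₀ ≤ Cardinal.mk K)
    (X : K → Ultrafilter K) (hXinj : Function.Injective X)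
    (hX : KDiscrete X)
    (G : Ultrafilter K) (hcl : G ∈ closure (Set.range X)) :
    ∃! H : Ultrafilter K, SigmaU X H = G := by
  obtain ⟨A, hdisj, hcover, hmem⟩ := hX
  have hex : ∀ x : K, ∃ a, x ∈ A a := by
    intro x
    have : x ∈ ⋃ a, A a := hcover ▸ Set.mem_univ x
    simpa using this
  choose f hf using hex
  have hcl' : ∀ S : Set K, S ∈ G → ∃ a, S ∈ X a := by
    intro S hS
    obtain ⟨u, hu, a, rfl⟩ :=
      mem_closure_iff.mp hcl _ (ultrafilter_isOpen_basic S) hS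
    exact ⟨a, hu⟩
  -- uniqueness core
  have huniq : ∀ H₁ H₂ : Ultrafilter K, SigmaU X H₁ = SigmaU X H₂ → H₁ = H₂ := by
    intro H₁ H₂ hEq
    refine (Ultrafilter.eq_of_le ?_).symm
    intro B hB
    set S : Set K := ⋃ a ∈ B, A a with hSdef
    have hTB : {a | S ∈ X a} ⊆ B := by
      intro a ha
      by_contra hnot
      have hdis : Disjoint S (A a) := by
        refine Set.disjoint_iUnion₂_left.mpr fun b hb => hdisj ?_
        rintro rfl; exact hnot hb
      have : S ∩ A a ∈ X a := (X a).inter_sets ha (hmem a)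
      rw [Set.disjoint_iff_inter_eq_empty.mp hdis] at this
      exact (X a).empty_notMem this
    have hBT : B ⊆ {a | S ∈ X a} := fun a ha =>
      (X a).sets_of_superset (hmem a) (Set.subset_biUnion_of_mem ha)
    have hS1 : S ∈ SigmaU X H₁ := by
      rw [SigmaU, mem_bind_iff]
      exact H₁.sets_of_superset hB hBT
    rw [hEq, SigmaU, mem_bind_iff] at hS1
    exact H₂.sets_of_superset hS1 hTB
  -- existence
  have hexist : SigmaU X (G.map f) = G := by
    refine Ultrafilter.eq_of_le ?_
    intro S hS
    rw [Ultrafilter.mem_coe, SigmaU, mem_bind_iff, Ultrafilter.mem_map]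
    by_contra hnot
    have h1 : (f ⁻¹' {a | S ∈ X a})ᶜ ∈ G := Ultrafilter.compl_mem_iff_notMem.mpr hnot
    have h2 : S ∩ (f ⁻¹' {a | S ∈ X a})ᶜ ∈ G := G.inter_sets hS h1
    obtain ⟨a, ha⟩ := hcl' _ h2
    have hTa : S ∩ (f ⁻¹' {a | S ∈ X a})ᶜ ∩ A a ∈ X a :=
      (X a).inter_sets ha (hmem a)
    obtain ⟨x, ⟨hxS, hxf⟩, hxA⟩ := (X a).nonempty_of_mem hTa
    have hfx : f x = a := by
      by_contra hne
      exact (hdisj hne).ne_of_mem (hf x) hxA rfl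
    have hSa : S ∈ X a := (X a).sets_of_superset hTa fun y hy => hy.1.1
    rw [Set.mem_compl_iff, Set.mem_preimage, hfx] at hxf
    exact hxf hSa
  exact ⟨G.map f, hexist, fun H hH => huniq H (G.map f) (hH.trans hexist.symm)⟩


end RFNote
end
end
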